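/- For a character η of U of finite order #η, the radical of the alternating character X_η (defined by X_η(π^a ε₁, π^b ε₂) = η(ε₁)^b η(ε₂)^{-a}) equals ⟨π^{#η}⟩ × Ker(η), and consequently F^×/Rad(X_η) ≅ Z/#η × Z/#η. -/

import Mathlib

/- We model `F^× ≅ ⟨π⟩ × U` as `Multiplicative ℤ × U`, with a uniformizer `π` being any
element of valuation (first component) `1`. -/

/-- The unit part of `x` with respect to a uniformizer `π`. -/
def unitPart {U : Type*} [CommGroup U] (π x : Multiplicative ℤ × U) : U :=
  (x * π ^ (-(Multiplicative.toAdd x.1))).2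

/-- The alternating character `X_η(π^a ε₁, π^b ε₂) = η(ε₁)^b · η(ε₂)^{-a}`. -/
def Xeta {U : Type*} [CommGroup U] (π : Multiplicative ℤ × U) (η : U →* ℂˣ)
    (x y : Multiplicative ℤ × U) : ℂˣ :=
  η (unitPart π x) ^ Multiplicative.toAdd y.1 *
    (η (unitPart π y) ^ Multiplicative.toAdd x.1)⁻¹

/-! The radical is the kernel of `x ↦ (v(x) mod #η, η(unitPart x)) : F^× → ℤ/#η × μ_{#η}`:
pairing `x` against `π` detects `η(unitPart x)`, and against the units detects `η ^ v(x)`. This map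
is onto because a character of order `n` takes every `n`-th root of unity as a value, and
`μ_n ≅ ℤ/n` is cyclic. -/

open Multiplicative

section RootsOfUnity

variable {G M : Type*} [Group G] [CommMonoid M]

lemma MonoidHom.pow_orderOf_apply (η : G →* Mˣ) (g : G) : η g ^ orderOf η = 1 := by
  rw [← MonoidHom.pow_apply, pow_orderOf_eq_one, MonoidHom.one_apply]

noncomputable def MonoidHom.toRootsOfUnity (η : G →* Mˣ) : G →* rootsOfUnity (orderOf η) M :=
  η.codRestrict _ fun g => (mem_rootsOfUnity _ _).2 (η.pow_orderOf_apply g)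

@[simp]
lemma MonoidHom.coe_toRootsOfUnity_apply (η : G →* Mˣ) (g : G) :
    (η.toRootsOfUnity g : Mˣ) = η g := rfl

/-- `|im η|` divides `|μ_n| = n`, while `η ^ |im η| = 1` forces `n ∣ |im η|`. -/
lemma MonoidHom.toRootsOfUnity_surjective (η : G →* Mˣ) [NeZero (orderOf η)]
    [HasEnoughRootsOfUnity M (orderOf η)] : Function.Surjective η.toRootsOfUnity := by
  rw [← MonoidHom.range_eq_top]
  set R := η.toRootsOfUnity.range
  have hcard := HasEnoughRootsOfUnity.natCard_rootsOfUnity M (orderOf η)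
  have hle : Nat.card R ∣ orderOf η := by
    simpa only [hcard] using R.card_subgroup_dvd_card
  have hge : orderOf η ∣ Nat.card R := by
    refine orderOf_dvd_of_pow_eq_one (MonoidHom.ext fun g => ?_)
    have h : (⟨_, g, rfl⟩ : R) ^ Nat.card R = 1 := pow_card_eq_one'
    have h' := congrArg (fun r : R => ((r : rootsOfUnity (orderOf η) M) : Mˣ)) h
    simpa only [SubgroupClass.coe_pow, OneMemClass.coe_one, η.coe_toRootsOfUnity_apply,
      MonoidHom.pow_apply, MonoidHom.one_apply] using h'
  exact R.eq_top_of_card_eq (by rw [hcard]; exact Nat.dvd_antisymm hle hge)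

noncomputable def zmodMulEquivRootsOfUnity (M : Type*) [CommMonoid M] (n : ℕ) [NeZero n]
    [HasEnoughRootsOfUnity M n] : Multiplicative (ZMod n) ≃* rootsOfUnity n M :=
  mulEquivOfCyclicCardEq <| by
    rw [HasEnoughRootsOfUnity.natCard_rootsOfUnity, Nat.card_eq_fintype_card,
      Fintype.card_multiplicative, ZMod.card]

end RootsOfUnity

section LocalField

variable {U : Type*} [CommGroup U] {π : Multiplicative ℤ × U}

lemma unitPart_eq (π x : Multiplicative ℤ × U) :
    unitPart π x = x.2 * π.2 ^ (-toAdd x.1) := rfl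

lemma unitPart_mul (π x y : Multiplicative ℤ × U) :
    unitPart π (x * y) = unitPart π x * unitPart π y := by
  simp only [unitPart_eq, Prod.fst_mul, toAdd_mul, Prod.snd_mul, neg_add, zpow_add]
  ac_rfl

lemma unitPart_one_mk (π : Multiplicative ℤ × U) (u : U) : unitPart π (1, u) = u := by
  simp [unitPart_eq]

lemma unitPart_self (hπ : π.1 = ofAdd 1) : unitPart π π = 1 := by
  simp [unitPart_eq, hπ]

lemma toAdd_fst_zpow_mul (hπ : π.1 = ofAdd 1) (m : ℤ) (u : U) :
    toAdd (π ^ m * (1, u)).1 = m := by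
  simp [hπ]

lemma unitPart_zpow_mul (hπ : π.1 = ofAdd 1) (m : ℤ) (u : U) :
    unitPart π (π ^ m * (1, u)) = u := by
  rw [unitPart_mul, unitPart_one_mk, unitPart_eq]
  simp [hπ]

lemma zpow_mul_unitPart (hπ : π.1 = ofAdd 1) (x : Multiplicative ℤ × U) :
    π ^ toAdd x.1 * (1, unitPart π x) = x := by
  ext
  · simp [hπ]
  · simp [unitPart_eq]

variable (π) in
def unitPartHom : (Multiplicative ℤ × U) →* U where
  toFun := unitPart π
  map_one' := unitPart_one_mk π 1
  map_mul' := unitPart_mul π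

end LocalField

section Radical

variable {U : Type*} [CommGroup U] {π : Multiplicative ℤ × U} {η : U →* ℂˣ}

lemma forall_xeta_eq_one_iff (hπ : π.1 = ofAdd 1) (x : Multiplicative ℤ × U) :
    (∀ y, Xeta π η x y = 1) ↔ (orderOf η : ℤ) ∣ toAdd x.1 ∧ η (unitPart π x) = 1 := by
  rw [orderOf_dvd_iff_zpow_eq_one]
  constructor
  · intro h
    have hunit : η (unitPart π x) = 1 := by
      simpa [Xeta, unitPart_self hπ, hπ] using h π
    refine ⟨MonoidHom.ext fun v => ?_, hunit⟩
    simpa [Xeta, unitPart_one_mk] using h (1, v)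
  · rintro ⟨hval, hunit⟩ y
    simp [Xeta, hunit, ← MonoidHom.zpow_apply, hval]

variable (π η)

noncomputable def valModCharHom :
    (Multiplicative ℤ × U) →* Multiplicative (ZMod (orderOf η)) × rootsOfUnity (orderOf η) ℂ :=
  ((Int.castAddHom _).toMultiplicative.comp (MonoidHom.fst _ _)).prod
    (η.toRootsOfUnity.comp (unitPartHom π))

lemma valModCharHom_apply (x : Multiplicative ℤ × U) :
    valModCharHom π η x =
      (ofAdd ((toAdd x.1 : ℤ) : ZMod (orderOf η)), η.toRootsOfUnity (unitPart π x)) :=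
  rfl

variable {π η}

lemma mem_ker_valModCharHom (x : Multiplicative ℤ × U) :
    x ∈ (valModCharHom π η).ker ↔ (orderOf η : ℤ) ∣ toAdd x.1 ∧ η (unitPart π x) = 1 := by
  rw [MonoidHom.mem_ker, valModCharHom_apply, Prod.mk_eq_one, ofAdd_eq_one,
    ZMod.intCast_zmod_eq_zero_iff_dvd, ← OneMemClass.coe_eq_one, η.coe_toRootsOfUnity_apply]

lemma valModCharHom_surjective (hπ : π.1 = ofAdd 1) [NeZero (orderOf η)] :
    Function.Surjective (valModCharHom π η) := by
  rintro ⟨c, w⟩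
  obtain ⟨m, rfl⟩ := ZMod.intCast_surjective (toAdd c)
  obtain ⟨u, rfl⟩ := η.toRootsOfUnity_surjective w
  refine ⟨π ^ m * (1, u), ?_⟩
  rw [valModCharHom_apply, unitPart_zpow_mul hπ, toAdd_fst_zpow_mul hπ]
  rfl

lemma exists_zpow_mul_iff (hπ : π.1 = ofAdd 1) (n : ℤ) (x : Multiplicative ℤ × U) :
    (n ∣ toAdd x.1 ∧ η (unitPart π x) = 1) ↔
      ∃ (k : ℤ) (u : U), η u = 1 ∧ x = π ^ (n * k) * (1, u) := by
  constructor
  · rintro ⟨⟨k, hk⟩, hunit⟩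
    exact ⟨k, unitPart π x, hunit, by rw [← hk, zpow_mul_unitPart hπ]⟩
  · rintro ⟨k, u, hu, rfl⟩
    rw [toAdd_fst_zpow_mul hπ, unitPart_zpow_mul hπ]
    exact ⟨dvd_mul_right n k, hu⟩

end Radical

/-- For `η` of finite order `n = #η`, the radical of `X_η` is `⟨π^{#η}⟩ × Ker(η)`, and
`F^×/Rad(X_η) ≅ Z/#η × Z/#η`. -/
theorem stmt11 {U : Type*} [CommGroup U] (π : Multiplicative ℤ × U)
    (hπ : π.1 = Multiplicative.ofAdd 1) (η : U →* ℂˣ) (n : ℕ) (hn : 0 < n)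
    (hord : orderOf η = n) :
    ∃ R : Subgroup (Multiplicative ℤ × U),
      (∀ x, x ∈ R ↔ ∀ y, Xeta π η x y = 1) ∧
      (∀ x, x ∈ R ↔ ∃ (k : ℤ) (u : U), η u = 1 ∧ x = π ^ ((n : ℤ) * k) * (1, u)) ∧
      Nonempty (((Multiplicative ℤ × U) ⧸ R) ≃* Multiplicative (ZMod n × ZMod n)) := by
  subst hord
  have : NeZero (orderOf η) := ⟨hn.ne'⟩
  refine ⟨(valModCharHom π η).ker, fun x => ?_, fun x => ?_, ?_⟩
  · rw [mem_ker_valModCharHom, forall_xeta_eq_one_iff hπ]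
  · rw [mem_ker_valModCharHom, exists_zpow_mul_iff hπ]
  · exact ⟨(QuotientGroup.quotientKerEquivOfSurjective _ (valModCharHom_surjective hπ)).trans
      ((MulEquiv.refl _).prodCongr (zmodMulEquivRootsOfUnity ℂ _).symm) |>.trans
      (MulEquiv.prodMultiplicative _ _).symm⟩
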